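/- arXiv:0807.4746 — 8 statements merged into one kernel-verified Lean document; each statement's English description precedes it below -/
import Mathlib

section
/- Let p, q be integers with 4 ≤ p ≤ q and 1/p + 1/q < 1/2. Then 2cos(π/p)cos(π/q) > 1. -/
open Real

theorem stmt_2 (p q : ℕ) (hp : 4 ≤ p) (hpq : p ≤ q)
    (h : (1:ℝ)/p + 1/q < 1/2) :
    2 * Real.cos (π / p) * Real.cos (π / q) > 1 := by
  have hq5 : 5 ≤ q := by
    by_contra hlt
    push_neg at hlt
    interval_cases q <;> interval_cases p <;> norm_num at h
  have hp0 : (0:ℝ) < p := by positivity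
  have hq0 : (0:ℝ) < q := by positivity
  have h4p : (4:ℝ) ≤ p := by exact_mod_cast hp
  have h4q : (4:ℝ) < q := by exact_mod_cast lt_of_lt_of_le (by norm_num) hq5
  have h1 : π / q < π / 4 := div_lt_div_of_pos_left pi_pos (by norm_num) h4q
  have h2 : π / p ≤ π / 4 := div_le_div_of_nonneg_left pi_pos.le (by norm_num) h4p
  have hpi4 : π / 4 ≤ π := by linarith [pi_pos]
  have hc1 : Real.cos (π / 4) < Real.cos (π / q) :=
    Real.cos_lt_cos_of_nonneg_of_le_pi (by positivity) hpi4 h1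
  have hc2 : Real.cos (π / 4) ≤ Real.cos (π / p) :=
    Real.cos_le_cos_of_nonneg_of_le_pi (by positivity) hpi4 h2
  rw [Real.cos_pi_div_four] at hc1 hc2
  have hs : Real.sqrt 2 ^ 2 = 2 := Real.sq_sqrt (by norm_num)
  have hs0 : (0:ℝ) < Real.sqrt 2 := by positivity
  nlinarith [hc1, hc2, hs, hs0]
end

section
/- Let q ≥ 5 be an integer and let K, K' be integers with 1 ≤ K, K' ≤ ⌊q/2⌋. Let C ≥ 0 be a real number. Then for every integer k with K ≤ k ≤ q − K and every integer k' with K' ≤ k' ≤ q − K', one has sin(kπ/q)·sin(k'π/q)·C − cos(kπ/q)·cos(k'π/q) ≥ sin(Kπ/q)·sin(K'π/q)·C − cos(Kπ/q)·cos(K'π/q). -/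
open Real

/- For `K ≤ k ≤ q - K` the angle `kπ/q` lies in `[Kπ/q, π - Kπ/q]`; on such an interval `sin`
is smallest and `|cos|` largest at the left endpoint, so both the `C`-term and the `-cos·cos`
term of the expression are minimised at `(K, K')`. -/

namespace Real

theorem sin_le_sin_of_le_of_le_pi_sub {x y : ℝ} (hy : 0 ≤ y) (hyx : y ≤ x) (hxy : x ≤ π - y) :
    sin y ≤ sin x := by
  rw [← cos_pi_div_two_sub, ← cos_pi_div_two_sub, ← cos_abs (π / 2 - x)]
  exact cos_le_cos_of_nonneg_of_le_pi (abs_nonneg _) (by linarith)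
    (abs_le.mpr ⟨by linarith, by linarith⟩)

theorem abs_cos_le_cos_of_le_of_le_pi_sub {x y : ℝ} (hy : 0 ≤ y) (hyx : y ≤ x)
    (hxy : x ≤ π - y) : |cos x| ≤ cos y := by
  refine abs_le.mpr ⟨?_, cos_le_cos_of_nonneg_of_le_pi hy (by linarith) hyx⟩
  rw [neg_le, ← cos_pi_sub]
  exact cos_le_cos_of_nonneg_of_le_pi hy (by linarith) (by linarith)

theorem sin_mul_sin_mul_sub_cos_mul_cos_le {x y x' y' C : ℝ} (hC : 0 ≤ C)
    (hy : 0 ≤ y) (hyx : y ≤ x) (hxy : x ≤ π - y)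
    (hy' : 0 ≤ y') (hyx' : y' ≤ x') (hxy' : x' ≤ π - y') :
    sin y * sin y' * C - cos y * cos y' ≤ sin x * sin x' * C - cos x * cos x' := by
  have hsin : sin y * sin y' ≤ sin x * sin x' :=
    mul_le_mul (sin_le_sin_of_le_of_le_pi_sub hy hyx hxy)
      (sin_le_sin_of_le_of_le_pi_sub hy' hyx' hxy')
      (sin_nonneg_of_nonneg_of_le_pi hy' (by linarith))
      ((sin_nonneg_of_nonneg_of_le_pi hy (by linarith)).trans
        (sin_le_sin_of_le_of_le_pi_sub hy hyx hxy))
  have hcos : cos x * cos x' ≤ cos y * cos y' :=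
    calc cos x * cos x' ≤ |cos x| * |cos x'| := by rw [← abs_mul]; exact le_abs_self _
      _ ≤ cos y * cos y' :=
        mul_le_mul (abs_cos_le_cos_of_le_of_le_pi_sub hy hyx hxy)
          (abs_cos_le_cos_of_le_of_le_pi_sub hy' hyx' hxy') (abs_nonneg _)
          ((abs_nonneg _).trans (abs_cos_le_cos_of_le_of_le_pi_sub hy hyx hxy))
  linarith [mul_le_mul_of_nonneg_right hsin hC]

end Real

theorem natCast_mul_pi_div_le_pi_sub {q k K : ℕ} (h : k + K ≤ q) :
    (k : ℝ) * π / q ≤ π - K * π / q := by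
  rw [le_sub_iff_add_le, ← add_div, ← add_mul, mul_div_right_comm]
  exact mul_le_of_le_one_left pi_pos.le (div_le_one_of_le₀ (by exact_mod_cast h) q.cast_nonneg)

theorem stmt_5_general (q K K' : ℕ)
    (C : ℝ) (hC : 0 ≤ C)
    (k k' : ℕ) (hk1 : K ≤ k) (hk2 : k ≤ q - K) (hk'1 : K' ≤ k') (hk'2 : k' ≤ q - K') :
    Real.sin (k * π / q) * Real.sin (k' * π / q) * C
        - Real.cos (k * π / q) * Real.cos (k' * π / q)
      ≥ Real.sin (K * π / q) * Real.sin (K' * π / q) * C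
        - Real.cos (K * π / q) * Real.cos (K' * π / q) :=
  sin_mul_sin_mul_sub_cos_mul_cos_le hC
    (by positivity) (by gcongr) (natCast_mul_pi_div_le_pi_sub (by omega))
    (by positivity) (by gcongr) (natCast_mul_pi_div_le_pi_sub (by omega))

theorem stmt_5 (q K K' : ℕ) (hq : 5 ≤ q)
    (hK : 1 ≤ K) (hKq : K ≤ q / 2) (hK' : 1 ≤ K') (hK'q : K' ≤ q / 2)
    (C : ℝ) (hC : 0 ≤ C)
    (k k' : ℕ) (hk1 : K ≤ k) (hk2 : k ≤ q - K) (hk'1 : K' ≤ k') (hk'2 : k' ≤ q - K') :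
    Real.sin (k * π / q) * Real.sin (k' * π / q) * C
        - Real.cos (k * π / q) * Real.cos (k' * π / q)
      ≥ Real.sin (K * π / q) * Real.sin (K' * π / q) * C
        - Real.cos (K * π / q) * Real.cos (K' * π / q) :=
  stmt_5_general q K K' C hC k k' hk1 hk2 hk'1 hk'2
end

section
/- Let p, q be integers with 3 ≤ p ≤ q, 1/p + 1/q < 1/2, and define D₂(k,k') = |sin(k'π/q)sin(kπ/q)·cosh(2c) − cos(kπ/q)cos(k'π/q)| where cosh(2c) = (2cos²(π/p) + cos²(π/q) − 1)/(1 − cos²(π/q)). Then D₂(1,2) = cos(π/q)(4cos²(π/p) − 1), D₂(1,q−1) = 2cos²(π/p) + 2cos²(π/q) − 1, D₂(1,3) = 8cos²(π/q)cos²(π/p) − 2cos²(π/p) − 2cos²(π/q) + 1, and D₂(2,2) = 8cos²(π/q)cos²(π/p) − 1. -/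
/-!
Put `θ = π/q`. The defining formula of `cosh 2c` says exactly that
`sin² θ · cosh 2c = 2 cos² (π/p) + cos² θ - 1`, and after expanding `sin 2θ`, `cos 2θ`, `sin 3θ`,
`cos 3θ` and `sin (π - θ)`, `cos (π - θ)`, each expression inside `D₂` is a polynomial multiple of
`sin² θ · cosh 2c` plus a polynomial in `cos θ`; substituting gives the four closed forms. They are
nonnegative because `cos (π/p) ≥ 1/2` for `p ≥ 3` and `cos² θ ≥ 1/2` since the hyperbolicity
condition forces `q > 4`.
-/

open Real

/-- `D₂ k k' = |signedD₂ (π / q) (cosh 2c) k k'|`. -/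
noncomputable def signedD₂ (θ C : ℝ) (k k' : ℕ) : ℝ :=
  sin (k' * θ) * sin (k * θ) * C - cos (k * θ) * cos (k' * θ)

section Identities

variable {a θ C : ℝ}

theorem sin_sq_mul_eq_of_eq_div (hθ : sin θ ≠ 0)
    (hC : C = (2 * a ^ 2 + cos θ ^ 2 - 1) / (1 - cos θ ^ 2)) :
    sin θ ^ 2 * C = 2 * a ^ 2 + cos θ ^ 2 - 1 := by
  rw [hC, ← sin_sq]
  field_simp

variable (hC : sin θ ^ 2 * C = 2 * a ^ 2 + cos θ ^ 2 - 1)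
include hC

theorem signedD₂_one_two : signedD₂ θ C 1 2 = cos θ * (4 * a ^ 2 - 1) := by
  simp only [signedD₂, Nat.cast_one, Nat.cast_ofNat, one_mul, sin_two_mul, cos_two_mul]
  linear_combination (2 * cos θ) * hC

theorem signedD₂_one_three :
    signedD₂ θ C 1 3 = 8 * cos θ ^ 2 * a ^ 2 - 2 * a ^ 2 - 2 * cos θ ^ 2 + 1 := by
  simp only [signedD₂, Nat.cast_one, Nat.cast_ofNat, one_mul, sin_three_mul, cos_three_mul]
  linear_combination (4 * cos θ ^ 2 - 1) * hC - 4 * sin θ ^ 2 * C * sin_sq_add_cos_sq θ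

theorem signedD₂_two_two : signedD₂ θ C 2 2 = 8 * cos θ ^ 2 * a ^ 2 - 1 := by
  simp only [signedD₂, Nat.cast_ofNat, sin_two_mul, cos_two_mul]
  linear_combination (4 * cos θ ^ 2) * hC

end Identities

theorem signedD₂_one_sub_one {a C : ℝ} {n : ℕ} (hn : n ≠ 0)
    (hC : sin (π / n) ^ 2 * C = 2 * a ^ 2 + cos (π / n) ^ 2 - 1) :
    signedD₂ (π / n) C 1 (n - 1) = 2 * a ^ 2 + 2 * cos (π / n) ^ 2 - 1 := by
  have hangle : ((n - 1 : ℕ) : ℝ) * (π / n) = π - π / n := by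
    rw [Nat.cast_sub (Nat.one_le_iff_ne_zero.mpr hn)]
    field_simp
    ring
  simp only [signedD₂, hangle, Nat.cast_one, one_mul, sin_pi_sub, cos_pi_sub]
  linear_combination hC

theorem four_lt_of_one_div_add_one_div_lt_half {p q : ℕ} (hp : 0 < p) (hpq : p ≤ q)
    (h : (1 : ℝ) / p + 1 / q < 1 / 2) : 4 < q := by
  have hp' : (0 : ℝ) < p := by exact_mod_cast hp
  have hpq' : (1 : ℝ) / q ≤ 1 / p := one_div_le_one_div_of_le hp' (by exact_mod_cast hpq)
  have hq' : (1 : ℝ) / q < 1 / 4 := by linarith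
  exact_mod_cast (one_div_lt_one_div (hp'.trans_le (by exact_mod_cast hpq)) (by norm_num)).mp hq'

theorem cos_pi_div_le_cos_pi_div {m n : ℕ} (hm : 0 < m) (hmn : m ≤ n) :
    cos (π / m) ≤ cos (π / n) := by
  have hm' : (1 : ℝ) ≤ m := by exact_mod_cast hm
  apply cos_le_cos_of_nonneg_of_le_pi (by positivity) (div_le_self pi_pos.le hm')
  exact div_le_div_of_nonneg_left pi_pos.le (by positivity) (by exact_mod_cast hmn)

theorem one_half_le_cos_pi_div {n : ℕ} (hn : 3 ≤ n) : 1 / 2 ≤ cos (π / n) := by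
  simpa [cos_pi_div_three] using cos_pi_div_le_cos_pi_div (m := 3) (by norm_num) hn

theorem one_half_le_cos_pi_div_sq {n : ℕ} (hn : 4 ≤ n) : 1 / 2 ≤ cos (π / n) ^ 2 := by
  have hc : √2 / 2 ≤ cos (π / n) := by
    simpa [cos_pi_div_four] using cos_pi_div_le_cos_pi_div (m := 4) (by norm_num) hn
  calc (1 : ℝ) / 2 = (√2 / 2) ^ 2 := by rw [div_pow, sq_sqrt zero_le_two]; norm_num
    _ ≤ cos (π / n) ^ 2 := pow_le_pow_left₀ (by positivity) hc 2

theorem sin_pi_div_pos {n : ℕ} (hn : 1 < n) : 0 < sin (π / n) :=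
  sin_pos_of_pos_of_lt_pi (by positivity) (div_lt_self pi_pos (by exact_mod_cast hn))

theorem stmt_7 (p q : ℕ) (hp : 3 ≤ p) (hpq : p ≤ q)
    (h : (1:ℝ)/p + 1/q < 1/2)
    (Ch : ℝ)
    (hCh : Ch = (2 * Real.cos (π / p) ^ 2 + Real.cos (π / q) ^ 2 - 1)
        / (1 - Real.cos (π / q) ^ 2))
    (D₂ : ℕ → ℕ → ℝ)
    (hD₂ : ∀ k k' : ℕ, D₂ k k'
      = |Real.sin (k' * π / q) * Real.sin (k * π / q) * Ch
          - Real.cos (k * π / q) * Real.cos (k' * π / q)|) :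
    D₂ 1 2 = Real.cos (π / q) * (4 * Real.cos (π / p) ^ 2 - 1) ∧
    D₂ 1 (q - 1) = 2 * Real.cos (π / p) ^ 2 + 2 * Real.cos (π / q) ^ 2 - 1 ∧
    D₂ 1 3 = 8 * Real.cos (π / q) ^ 2 * Real.cos (π / p) ^ 2
        - 2 * Real.cos (π / p) ^ 2 - 2 * Real.cos (π / q) ^ 2 + 1 ∧
    D₂ 2 2 = 8 * Real.cos (π / q) ^ 2 * Real.cos (π / p) ^ 2 - 1 := by
  have hq : 4 < q := four_lt_of_one_div_add_one_div_lt_half (by omega) hpq h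
  have hD : ∀ k k', D₂ k k' = |signedD₂ (π / q) Ch k k'| := by
    intro k k'
    simp only [hD₂, signedD₂, mul_div_assoc]
  have hC := sin_sq_mul_eq_of_eq_div (sin_pi_div_pos (by omega)).ne' hCh
  have ha : 1 / 2 ≤ cos (π / p) := one_half_le_cos_pi_div hp
  have ha2 : 1 / 4 ≤ cos (π / p) ^ 2 := by nlinarith
  have hc : 1 / 2 ≤ cos (π / q) := one_half_le_cos_pi_div (by omega)
  have hc2 : 1 / 2 ≤ cos (π / q) ^ 2 := one_half_le_cos_pi_div_sq (by omega)
  rw [hD, hD, hD, hD, signedD₂_one_two hC, signedD₂_one_sub_one (by omega) hC,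
    signedD₂_one_three hC, signedD₂_two_two hC]
  refine ⟨abs_of_nonneg ?_, abs_of_nonneg ?_, abs_of_nonneg ?_, abs_of_nonneg ?_⟩
  · exact mul_nonneg (by linarith) (by linarith)
  · linarith
  · nlinarith [mul_nonneg (by linarith : 0 ≤ 4 * cos (π / p) ^ 2 - 1)
      (by linarith : 0 ≤ 4 * cos (π / q) ^ 2 - 1)]
  · nlinarith [mul_le_mul ha2 hc2 (by norm_num) (by positivity)]
end

section
/- Let p, q be integers with 4 ≤ p ≤ q and 1/p + 1/q < 1/2. Then 2cos²(π/p) + 2cos²(π/q) − 1 > cos(π/q)(4cos²(π/p) − 1), i.e. D₂(1,q−1) > D₂(1,2). -/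
open Real

theorem stmt_9 (p q : ℕ) (hp : 4 ≤ p) (hpq : p ≤ q)
    (h : (1:ℝ)/p + 1/q < 1/2) :
    2 * Real.cos (π / p) ^ 2 + 2 * Real.cos (π / q) ^ 2 - 1
      > Real.cos (π / q) * (4 * Real.cos (π / p) ^ 2 - 1) := by
  have hq4 : 4 ≤ q := le_trans hp hpq
  have hpr : (4:ℝ) ≤ (p:ℝ) := by exact_mod_cast hp
  have hqr : (4:ℝ) ≤ (q:ℝ) := by exact_mod_cast hq4
  have hpqr : (p:ℝ) ≤ (q:ℝ) := by exact_mod_cast hpq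
  have hp0 : (0:ℝ) < p := by linarith
  have hq0 : (0:ℝ) < q := by linarith
  have hpi : (0:ℝ) < π := Real.pi_pos
  set a := Real.cos (π / p) with ha
  set b := Real.cos (π / q) with hb
  -- π/q ≤ π/p ≤ π/4
  have h1 : π / q ≤ π / p := div_le_div_of_nonneg_left hpi.le hp0 hpqr
  have h2 : π / p ≤ π / 4 := div_le_div_of_nonneg_left hpi.le (by norm_num) hpr
  have h3 : 0 < π / q := div_pos hpi hq0
  have hqpi : π / q ≤ π := by
    have : π / q ≤ π / 4 := le_trans h1 h2
    linarith
  have hb1 : b < 1 := by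
    have := Real.cos_lt_cos_of_nonneg_of_le_pi (le_refl (0:ℝ)) hqpi h3
    simpa [hb] using this
  have hab : a ≤ b := by
    apply Real.cos_le_cos_of_nonneg_of_le_pi (le_of_lt h3)
    · linarith
    · exact h1
  have hbh : (1:ℝ)/2 < b := by
    have hcos4 : Real.cos (π / 4) = Real.sqrt 2 / 2 := Real.cos_pi_div_four
    have : Real.cos (π / 4) ≤ b := by
      apply Real.cos_le_cos_of_nonneg_of_le_pi (le_of_lt h3)
      · linarith
      · linarith [h1, h2]
    have h2lt : (1:ℝ) < Real.sqrt 2 := by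
      have : Real.sqrt 1 < Real.sqrt 2 := by
        apply Real.sqrt_lt_sqrt <;> norm_num
      simpa using this
    rw [hcos4] at this
    linarith
  have key : (0:ℝ) < (2*b - 1) * (1 + b - 2*a^2) := by
    apply mul_pos
    · linarith
    · have ha0 : 0 ≤ a := by
        apply Real.cos_nonneg_of_mem_Icc
        constructor <;> [linarith; linarith]
      nlinarith [mul_pos (show (0:ℝ)<2*b+1 by linarith) (show (0:ℝ)<1-b by linarith),
        mul_self_le_mul_self ha0 hab]
  nlinarith [key]
end

section
/- Let p, q be integers with 4 ≤ p ≤ q and q ≥ 5. Then 4cos²(π/p)cos(π/q) + 4cos³(π/q) − 3cos(π/q) − 2cos²(π/q) − 2cos²(π/p) + 1 ≥ 0, i.e. D₂(1,q−2) ≥ D₂(1,q−1), where this expression equals 2(2cos(π/q) − 1)(cos²(π/p) + cos²(π/q)) + 1 − 3cos(π/q). -/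
open Real

theorem stmt_10 (p q : ℕ) (hp : 4 ≤ p) (hpq : p ≤ q) (hq : 5 ≤ q) :
    (4 * Real.cos (π / p) ^ 2 * Real.cos (π / q) + 4 * Real.cos (π / q) ^ 3
        - 3 * Real.cos (π / q) - 2 * Real.cos (π / q) ^ 2
        - 2 * Real.cos (π / p) ^ 2 + 1 ≥ 0) ∧
    (4 * Real.cos (π / p) ^ 2 * Real.cos (π / q) + 4 * Real.cos (π / q) ^ 3
        - 3 * Real.cos (π / q) - 2 * Real.cos (π / q) ^ 2
        - 2 * Real.cos (π / p) ^ 2 + 1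
      = 2 * (2 * Real.cos (π / q) - 1)
          * (Real.cos (π / p) ^ 2 + Real.cos (π / q) ^ 2)
        + 1 - 3 * Real.cos (π / q)) := by
  have hπ := Real.pi_pos
  have hp4 : (4:ℝ) ≤ (p:ℝ) := by exact_mod_cast hp
  have hq5 : (5:ℝ) ≤ (q:ℝ) := by exact_mod_cast hq
  have hpa : π / (p:ℝ) ≤ π / 4 :=
    div_le_div_of_nonneg_left (le_of_lt hπ) (by norm_num) hp4
  have hqa : π / (q:ℝ) ≤ π / 5 :=
    div_le_div_of_nonneg_left (le_of_lt hπ) (by norm_num) hq5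
  have hcp : Real.cos (π / 4) ≤ Real.cos (π / p) := by
    apply Real.cos_le_cos_of_nonneg_of_le_pi
    · positivity
    · linarith
    · exact hpa
  have hcq : Real.cos (π / 5) ≤ Real.cos (π / q) := by
    apply Real.cos_le_cos_of_nonneg_of_le_pi
    · positivity
    · linarith
    · exact hqa
  rw [Real.cos_pi_div_four] at hcp
  rw [Real.cos_pi_div_five] at hcq
  have h2 : Real.sqrt 2 ^ 2 = 2 := Real.sq_sqrt (by norm_num)
  have h5 : Real.sqrt 5 ^ 2 = 5 := Real.sq_sqrt (by norm_num)
  have h2' : (1:ℝ) ≤ Real.sqrt 2 := by nlinarith [Real.sqrt_nonneg 2]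
  have h5' : (2:ℝ) ≤ Real.sqrt 5 := by nlinarith [Real.sqrt_nonneg 5]
  have ha2 : (1:ℝ)/2 ≤ Real.cos (π / p) ^ 2 := by nlinarith
  constructor
  · nlinarith [sq_nonneg (Real.cos (π / q) - (1 + Real.sqrt 5) / 4),
      sq_nonneg (Real.cos (π / q)), hcq]
  · ring
end

section
/- Let X ∈ [cos(π/11), 1) and Y ∈ [X, 1). Then 16X²(2X² − 1) − 8X²(X² + Y²) + 2 > 0; in particular (X² + Y² − 1)·(16X²(2X² − 1) − 8X²(X² + Y²) + 2) > 0 when additionally X² + Y² > 1. -/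
open Real

theorem stmt_14 (X Y : ℝ) (hX : X ∈ Set.Ico (Real.cos (π / 11)) 1)
    (hY : Y ∈ Set.Ico X 1) :
    16 * X ^ 2 * (2 * X ^ 2 - 1) - 8 * X ^ 2 * (X ^ 2 + Y ^ 2) + 2 > 0 ∧
    (X ^ 2 + Y ^ 2 > 1 →
      (X ^ 2 + Y ^ 2 - 1)
        * (16 * X ^ 2 * (2 * X ^ 2 - 1) - 8 * X ^ 2 * (X ^ 2 + Y ^ 2) + 2) > 0) := by
  obtain ⟨hX1, hX2⟩ := hX
  obtain ⟨hY1, hY2⟩ := hY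
  have hpi : π < 3.1416 := by linarith [Real.pi_lt_d6]
  have hpi0 : (0:ℝ) < π := Real.pi_pos
  have hc : 1 - (π / 11) ^ 2 / 2 ≤ Real.cos (π / 11) :=
    Real.one_sub_sq_div_two_le_cos
  have hXlb : (0.959 : ℝ) ≤ X := by nlinarith
  have hXpos : 0 < X := by linarith
  have hY2lt : Y ^ 2 < 1 := by nlinarith
  have key : 16 * X ^ 2 * (2 * X ^ 2 - 1) - 8 * X ^ 2 * (X ^ 2 + Y ^ 2) + 2 > 0 := by
    nlinarith [sq_nonneg X, sq_nonneg (X - 0.959), sq_nonneg (X^2 - 0.92)]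
  exact ⟨key, fun h => mul_pos (by linarith) key⟩
end

section
/- The only integer solutions q ≥ 5, q' ≥ 7 of 2cos(π/5)cos(π/q) = 2cos²(π/q') − 1/2 with q ≤ 8 are q = 5, q' = 10. In particular the triangle groups Γ(2,5,5) and Γ(2,3,10) have equal systoles. -/
open Real

private lemma cosTaylor {x lo hi : ℝ} (h1 : lo ≤ x) (h2 : x ≤ hi) (h0 : 0 ≤ lo)
    (hh : hi ≤ 1) :
    1 - hi ^ 2 / 2 - hi ^ 4 * (5 / 96) ≤ Real.cos x ∧
      Real.cos x ≤ 1 - lo ^ 2 / 2 + hi ^ 4 * (5 / 96) := by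
  have hx : |x| ≤ 1 := by rw [abs_le]; constructor <;> linarith
  have hb := Real.cos_bound hx
  rw [abs_sub_le_iff] at hb
  have hxa : |x| = x := abs_of_nonneg (by linarith)
  rw [hxa] at hb
  have hx0 : 0 ≤ x := le_trans h0 h1
  have hsq : x ^ 2 ≤ hi ^ 2 := by nlinarith
  have hsq2 : lo ^ 2 ≤ x ^ 2 := by nlinarith
  have h4 : x ^ 4 ≤ hi ^ 4 := by nlinarith [sq_nonneg x, sq_nonneg hi, hsq]
  constructor <;> linarith [hb.1, hb.2]

private lemma cosDouble {x a b : ℝ} (ha : a ≤ Real.cos x) (hb : Real.cos x ≤ b)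
    (h0 : 0 ≤ a) :
    2 * a ^ 2 - 1 ≤ Real.cos (2 * x) ∧ Real.cos (2 * x) ≤ 2 * b ^ 2 - 1 := by
  rw [Real.cos_two_mul]
  constructor <;> nlinarith

private lemma notCosEq {v : ℝ} {N : ℕ} (hN : 7 ≤ N)
    (h1 : Real.cos (2 * π / N) < v) (h2 : v < Real.cos (2 * π / (N + 1)))
    {q' : ℕ} (hq' : 7 ≤ q') : Real.cos (2 * π / q') ≠ v := by
  have hπ := Real.pi_pos
  intro h
  have hq'0 : (0:ℝ) < q' := by exact_mod_cast Nat.pos_of_ne_zero (by omega)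
  have hq'7 : (7:ℝ) ≤ q' := by exact_mod_cast hq'
  have hN0 : (0:ℝ) < N := by exact_mod_cast Nat.pos_of_ne_zero (by omega)
  rcases le_or_gt q' N with hle | hlt
  · have hleR : (q':ℝ) ≤ N := by exact_mod_cast hle
    have ha : 2 * π / N ≤ 2 * π / q' :=
      div_le_div_of_nonneg_left (by linarith) hq'0 hleR
    have hb : 2 * π / q' ≤ π := by
      rw [div_le_iff₀ hq'0]
      have := mul_le_mul_of_nonneg_left hq'7 hπ.le
      linarith
    have hmono := Real.cos_le_cos_of_nonneg_of_le_pi (by positivity) hb ha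
    rw [h] at hmono
    linarith
  · have hltR : ((N:ℝ) + 1) ≤ q' := by exact_mod_cast hlt
    have ha : 2 * π / q' ≤ 2 * π / (N + 1) :=
      div_le_div_of_nonneg_left (by linarith) (by linarith) hltR
    have hb : 2 * π / (N + 1) ≤ π := by
      rw [div_le_iff₀ (by linarith : (0:ℝ) < (N:ℝ) + 1)]
      have hNR : (7:ℝ) ≤ N := by exact_mod_cast hN
      have := mul_le_mul_of_nonneg_left (by linarith : (8:ℝ) ≤ (N:ℝ) + 1) hπ.le
      linarith
    have hmono := Real.cos_le_cos_of_nonneg_of_le_pi (by positivity) hb ha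
    rw [h] at hmono
    linarith

private lemma sqrt5_bounds : (2.2360679774 : ℝ) ≤ √5 ∧ √5 ≤ 2.2360679776 := by
  have h := Real.sq_sqrt (by norm_num : (0:ℝ) ≤ 5)
  have h0 := Real.sqrt_nonneg 5
  constructor <;> nlinarith

private lemma sqrt3_bounds : (1.7320508075 : ℝ) ≤ √3 ∧ √3 ≤ 1.7320508076 := by
  have h := Real.sq_sqrt (by norm_num : (0:ℝ) ≤ 3)
  have h0 := Real.sqrt_nonneg 3
  constructor <;> nlinarith

private lemma sqrt2_bounds : (1.4142135623 : ℝ) ≤ √2 ∧ √2 ≤ 1.4142135624 := by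
  have h := Real.sq_sqrt (by norm_num : (0:ℝ) ≤ 2)
  have h0 := Real.sqrt_nonneg 2
  constructor <;> nlinarith

private lemma sqrt2p2_bounds :
    (1.8477590648 : ℝ) ≤ √(2 + √2) ∧ √(2 + √2) ≤ 1.8477590652 := by
  have h2 := sqrt2_bounds
  have h := Real.sq_sqrt (by nlinarith [h2.1] : (0:ℝ) ≤ 2 + √2)
  have h0 := Real.sqrt_nonneg (2 + √2)
  constructor <;> nlinarith [h2.1, h2.2]

private lemma cos_pi_div_31 :
    (0.994869167967 : ℝ) ≤ Real.cos (π / 31) ∧ Real.cos (π / 31) ≤ 0.994869342683 := by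
  have hπl := Real.pi_gt_d6
  have hπu := Real.pi_lt_d6
  have t := cosTaylor (x := π / 248) (lo := 3.141592 / 248) (hi := 3.141593 / 248)
    (by linarith) (by linarith) (by norm_num) (by norm_num)
  have b248 : (0.999919763173 : ℝ) ≤ Real.cos (π / 248) ∧
      Real.cos (π / 248) ≤ 0.999919765907 :=
    ⟨le_trans (by norm_num) t.1, le_trans t.2 (by norm_num)⟩
  have d124 := cosDouble b248.1 b248.2 (by norm_num)
  rw [show 2 * (π / 248) = π / 124 by ring] at d124
  have b124 : (0.999679065567 : ℝ) ≤ Real.cos (π / 124) ∧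
      Real.cos (π / 124) ≤ 0.999679076504 :=
    ⟨le_trans (by norm_num) d124.1, le_trans d124.2 (by norm_num)⟩
  have d62 := cosDouble b124.1 b124.2 (by norm_num)
  rw [show 2 * (π / 124) = π / 62 by ring] at d62
  have b62 : (0.998716468265 : ℝ) ≤ Real.cos (π / 62) ∧
      Real.cos (π / 62) ≤ 0.998716512000 :=
    ⟨le_trans (by norm_num) d62.1, le_trans d62.2 (by norm_num)⟩
  have d31 := cosDouble b62.1 b62.2 (by norm_num)
  rw [show 2 * (π / 62) = π / 31 by ring] at d31
  exact ⟨le_trans (by norm_num) d31.1, le_trans d31.2 (by norm_num)⟩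

private lemma cos_pi_div_7 :
    (0.900911365486 : ℝ) ≤ Real.cos (π / 7) ∧ Real.cos (π / 7) ≤ 0.900975298307 := by
  have hπl := Real.pi_gt_d6
  have hπu := Real.pi_lt_d6
  have t := cosTaylor (x := π / 56) (lo := 3.141592 / 56) (hi := 3.141593 / 56)
    (by linarith) (by linarith) (by norm_num) (by norm_num)
  have b56 : (0.998425886135 : ℝ) ≤ Real.cos (π / 56) ∧
      Real.cos (π / 56) ≤ 0.998426918892 :=
    ⟨le_trans (by norm_num) t.1, le_trans t.2 (by norm_num)⟩
  have d28 := cosDouble b56.1 b56.2 (by norm_num)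
  rw [show 2 * (π / 56) = π / 28 by ring] at d28
  have b28 : (0.993708500208 : ℝ) ≤ Real.cos (π / 28) ∧
      Real.cos (π / 28) ≤ 0.993712624737 :=
    ⟨le_trans (by norm_num) d28.1, le_trans d28.2 (by norm_num)⟩
  have d14 := cosDouble b28.1 b28.2 (by norm_num)
  rw [show 2 * (π / 28) = π / 14 by ring] at d14
  have b14 : (0.974913166771 : ℝ) ≤ Real.cos (π / 14) ∧
      Real.cos (π / 14) ≤ 0.974929561124 :=
    ⟨le_trans (by norm_num) d14.1, le_trans d14.2 (by norm_num)⟩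
  have d7 := cosDouble b14.1 b14.2 (by norm_num)
  rw [show 2 * (π / 14) = π / 7 by ring] at d7
  exact ⟨le_trans (by norm_num) d7.1, le_trans d7.2 (by norm_num)⟩

private lemma cos_2pi_div_15 :
    (0.910666721219 : ℝ) ≤ Real.cos (2 * π / 15) := by
  have hπl := Real.pi_gt_d6
  have hπu := Real.pi_lt_d6
  have t := cosTaylor (x := 2 * π / 15) (lo := 6.283184 / 15) (hi := 6.283186 / 15)
    (by linarith) (by linarith) (by norm_num) (by norm_num)
  exact le_trans (by norm_num) t.1

private lemma cos_2pi_div_21 :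
    Real.cos (2 * π / 21) ≤ 0.955657297210 := by
  have hπl := Real.pi_gt_d6
  have hπu := Real.pi_lt_d6
  have t := cosTaylor (x := 2 * π / 21) (lo := 6.283184 / 21) (hi := 6.283186 / 21)
    (by linarith) (by linarith) (by norm_num) (by norm_num)
  exact le_trans t.2 (by norm_num)

private lemma cos_pi_div_11 :
    (0.958869982218 : ℝ) ≤ Real.cos (π / 11) := by
  have hπl := Real.pi_gt_d6
  have hπu := Real.pi_lt_d6
  have t := cosTaylor (x := π / 11) (lo := 3.141592 / 11) (hi := 3.141593 / 11)
    (by linarith) (by linarith) (by norm_num) (by norm_num)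
  exact le_trans (by norm_num) t.1

private lemma cos_2pi_div_61 :
    Real.cos (2 * π / 61) ≤ 0.994701052027 := by
  have hπl := Real.pi_gt_d6
  have hπu := Real.pi_lt_d6
  have t := cosTaylor (x := 2 * π / 61) (lo := 6.283184 / 61) (hi := 6.283186 / 61)
    (by linarith) (by linarith) (by norm_num) (by norm_num)
  exact le_trans t.2 (by norm_num)

set_option maxHeartbeats 2000000 in
theorem stmt_18 :
    (∀ q q' : ℕ, 5 ≤ q → q ≤ 8 → 7 ≤ q' →
      2 * Real.cos (π / 5) * Real.cos (π / q)
          = 2 * Real.cos (π / q') ^ 2 - 1/2 →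
      q = 5 ∧ q' = 10) ∧
    2 * Real.cos (π / 5) * Real.cos (π / 5)
      = 2 * Real.cos (π / 10) ^ 2 - 1/2 := by
  have h5 : Real.cos (π / 5) = (1 + √5) / 4 := Real.cos_pi_div_five
  have hs5 := sqrt5_bounds
  have hsq5 := Real.sq_sqrt (by norm_num : (0:ℝ) ≤ 5)
  have hid : 2 * Real.cos (π / 5) * Real.cos (π / 5) = Real.cos (π / 5) + 1/2 := by
    rw [h5]; nlinarith
  have h10 : Real.cos (π / 5) = 2 * Real.cos (π / 10) ^ 2 - 1 := by
    rw [show π / 5 = 2 * (π / 10) by ring, Real.cos_two_mul]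
  constructor
  · intro q q' hq hq8 hq' heq
    have hπ := Real.pi_pos
    have hq'0 : (0:ℝ) < q' := by
      exact_mod_cast Nat.pos_of_ne_zero (by omega)
    have key : Real.cos (2 * π / q') = 2 * Real.cos (π / 5) * Real.cos (π / q) - 1/2 := by
      rw [show 2 * π / (q':ℝ) = 2 * (π / q') by ring, Real.cos_two_mul]
      linarith
    interval_cases q
    · -- q = 5
      refine ⟨rfl, ?_⟩
      have hcast : ((5:ℕ):ℝ) = 5 := by norm_num
      rw [hcast] at key
      have keq : Real.cos (2 * π / q') = Real.cos (π / 5) := by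
        rw [key]; linarith [hid]
      have hq'7 : (7:ℝ) ≤ q' := by exact_mod_cast hq'
      have hmem1 : 2 * π / (q':ℝ) ∈ Set.Icc 0 π := by
        constructor
        · positivity
        · rw [div_le_iff₀ hq'0]
          have := mul_le_mul_of_nonneg_left hq'7 hπ.le
          linarith
      have hmem2 : π / 5 ∈ Set.Icc 0 π := by
        constructor
        · positivity
        · linarith
      have heq2 := Real.injOn_cos hmem1 hmem2 keq
      have hq'eq : (q':ℝ) = 10 := by
        field_simp at heq2
        nlinarith [heq2]
      exact_mod_cast hq'eq
    · -- q = 6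
      exfalso
      have hcast : ((6:ℕ):ℝ) = 6 := by norm_num
      rw [hcast, Real.cos_pi_div_six] at key
      have hs3 := sqrt3_bounds
      have h7 := cos_pi_div_7
      have h15 := cos_2pi_div_15
      refine notCosEq (v := 2 * Real.cos (π / 5) * (√3 / 2) - 1/2)
        (N := 14) (by norm_num) ?_ ?_ hq' key
      · rw [show 2 * π / ((14:ℕ):ℝ) = π / 7 by norm_num; ring]
        rw [h5]
        have hp : (0:ℝ) ≤ (√5 - 2.2360679774) * (√3 - 1.7320508075) :=
          mul_nonneg (by linarith [hs5.1]) (by linarith [hs3.1])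
        nlinarith [h7.2, hs3.1, hs3.2, hs5.1, hs5.2, hp]
      · rw [show ((14:ℕ):ℝ) + 1 = 15 by norm_num, show 2 * π / (15:ℝ) = 2 * π / 15 by norm_num]
        rw [h5]
        have hp : (0:ℝ) ≤ (√5 - 2.2360679774) * (1.7320508076 - √3) :=
          mul_nonneg (by linarith [hs5.1]) (by linarith [hs3.2])
        nlinarith [h15, hs3.1, hs3.2, hs5.1, hs5.2, hp]
    · -- q = 7
      exfalso
      have hcast : ((7:ℕ):ℝ) = 7 := by norm_num
      rw [hcast] at key
      have h7 := cos_pi_div_7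
      have h21 := cos_2pi_div_21
      have h11 := cos_pi_div_11
      refine notCosEq (v := 2 * Real.cos (π / 5) * Real.cos (π / 7) - 1/2)
        (N := 21) (by norm_num) ?_ ?_ hq' key
      · rw [show 2 * π / ((21:ℕ):ℝ) = 2 * π / 21 by norm_num]
        rw [h5]
        have hp : (0:ℝ) ≤ (√5 - 2.2360679774) * (Real.cos (π / 7) - 0.900911365486) :=
          mul_nonneg (by linarith [hs5.1]) (by linarith [h7.1])
        nlinarith [h21, h7.1, h7.2, hs5.1, hs5.2, hp]
      · rw [show 2 * π / (((21:ℕ):ℝ) + 1) = π / 11 by norm_num; ring]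
        rw [h5]
        have hp : (0:ℝ) ≤ (√5 - 2.2360679774) * (0.900975298307 - Real.cos (π / 7)) :=
          mul_nonneg (by linarith [hs5.1]) (by linarith [h7.2])
        nlinarith [h11, h7.1, h7.2, hs5.1, hs5.2, hp]
    · -- q = 8
      exfalso
      have hcast : ((8:ℕ):ℝ) = 8 := by norm_num
      rw [hcast, Real.cos_pi_div_eight] at key
      have hss := sqrt2p2_bounds
      have h61 := cos_2pi_div_61
      have h31 := cos_pi_div_31
      refine notCosEq (v := 2 * Real.cos (π / 5) * (√(2 + √2) / 2) - 1/2)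
        (N := 61) (by norm_num) ?_ ?_ hq' key
      · rw [show 2 * π / ((61:ℕ):ℝ) = 2 * π / 61 by norm_num]
        rw [h5]
        have hp : (0:ℝ) ≤ (√5 - 2.2360679774) * (√(2 + √2) - 1.8477590648) :=
          mul_nonneg (by linarith [hs5.1]) (by linarith [hss.1])
        nlinarith [h61, hss.1, hss.2, hs5.1, hs5.2, hp]
      · rw [show 2 * π / (((61:ℕ):ℝ) + 1) = π / 31 by norm_num; ring]
        rw [h5]
        have hp : (0:ℝ) ≤ (√5 - 2.2360679774) * (1.8477590652 - √(2 + √2)) :=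
          mul_nonneg (by linarith [hs5.1]) (by linarith [hss.2])
        nlinarith [h31.1, hss.1, hss.2, hs5.1, hs5.2, hp]
  · linarith [hid, h10]
end

section
/- The integers q = 12, q' = 12 satisfy √2·cos(π/q) = 2cos²(π/q') − 1/2, and this is the only solution with q ≥ 4 and 7 ≤ q' ≤ 15. In particular Γ(2,4,12) and Γ(2,3,12) have equal systoles. -/
set_option maxHeartbeats 1000000

open Real

private lemma cos_bnd {x a b : ℝ} (ha : 0 ≤ a) (hax : a ≤ x) (hxb : x ≤ b) (hb1 : b ≤ 1) :
    1 - b^2/2 - 5*b^4/96 ≤ Real.cos x ∧ Real.cos x ≤ 1 - a^2/2 + 5*b^4/96 := by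
  have hx0 : 0 ≤ x := ha.trans hax
  have hx1 : |x| ≤ 1 := by rw [abs_of_nonneg hx0]; linarith
  have h := Real.cos_bound hx1
  rw [abs_of_nonneg hx0] at h
  rw [abs_le] at h
  have hb0 : 0 ≤ b := hx0.trans hxb
  have hx2 : x^2 ≤ b^2 := by nlinarith
  have ha2 : a^2 ≤ x^2 := by nlinarith
  have hx4 : x^4 ≤ b^4 := by nlinarith [mul_le_mul hx2 hx2 (sq_nonneg x) (sq_nonneg b)]
  constructor <;> nlinarith [h.1, h.2]

private lemma cos_dbl {x l u : ℝ} (h0 : 0 ≤ l) (hl : l ≤ Real.cos x) (hu : Real.cos x ≤ u) :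
    2*l^2-1 ≤ Real.cos (2*x) ∧ Real.cos (2*x) ≤ 2*u^2-1 := by
  rw [Real.cos_two_mul]
  constructor <;> nlinarith

private lemma cos_mono {m n : ℕ} (hm : 1 ≤ m) (hmn : m ≤ n) :
    Real.cos (π / m) ≤ Real.cos (π / n) := by
  have hm' : (1:ℝ) ≤ m := by exact_mod_cast hm
  have hn' : (m:ℝ) ≤ n := by exact_mod_cast hmn
  have h0 : (0:ℝ) < m := by linarith
  have h1 : (0:ℝ) < n := by linarith
  refine Real.cos_le_cos_of_nonneg_of_le_pi (by positivity) ?_ (by gcongr)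
  exact div_le_self Real.pi_pos.le hm'

private lemma cos_strict {m n : ℕ} (hm : 1 ≤ m) (hmn : m < n) :
    Real.cos (π / m) < Real.cos (π / n) := by
  have hm' : (1:ℝ) ≤ m := by exact_mod_cast hm
  have hn' : (m:ℝ) < n := by exact_mod_cast hmn
  have h0 : (0:ℝ) < m := by linarith
  have h1 : (0:ℝ) < n := by linarith
  refine Real.cos_lt_cos_of_nonneg_of_le_pi (by positivity) ?_ (by gcongr)
  exact div_le_self Real.pi_pos.le hm'

private lemma no_low {q n : ℕ} {v U s : ℝ} (hq1 : 1 ≤ q) (hqn : q ≤ n)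
    (hU : Real.cos (π/(n:ℝ)) ≤ U) (hU0 : 0 ≤ U) (hs : Real.sqrt 2 ≤ s)
    (hUs : s * U < v) (heq : Real.sqrt 2 * Real.cos (π/(q:ℝ)) = v) : False := by
  have hm : Real.cos (π/(q:ℝ)) ≤ Real.cos (π/(n:ℝ)) := cos_mono hq1 hqn
  have h1 : Real.sqrt 2 * Real.cos (π/(q:ℝ)) ≤ Real.sqrt 2 * U :=
    mul_le_mul_of_nonneg_left (hm.trans hU) (Real.sqrt_nonneg 2)
  have h2 : Real.sqrt 2 * U ≤ s * U := mul_le_mul_of_nonneg_right hs hU0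
  linarith

private lemma no_high {q n : ℕ} {v L s : ℝ} (hn1 : 1 ≤ n) (hqn : n ≤ q)
    (hL : L ≤ Real.cos (π/(n:ℝ))) (hL0 : 0 ≤ L) (hs0 : 0 ≤ s) (hs : s ≤ Real.sqrt 2)
    (hLs : v < s * L) (heq : Real.sqrt 2 * Real.cos (π/(q:ℝ)) = v) : False := by
  have hm : Real.cos (π/(n:ℝ)) ≤ Real.cos (π/(q:ℝ)) := cos_mono hn1 hqn
  have h1 : s * L ≤ Real.sqrt 2 * Real.cos (π/(n:ℝ)) :=
    mul_le_mul hs hL hL0 (Real.sqrt_nonneg 2)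
  have h2 : Real.sqrt 2 * Real.cos (π/(n:ℝ)) ≤ Real.sqrt 2 * Real.cos (π/(q:ℝ)) :=
    mul_le_mul_of_nonneg_left hm (Real.sqrt_nonneg 2)
  linarith

private lemma cosb4 : (0.698896163471:ℝ) ≤ Real.cos (π/4) ∧ Real.cos (π/4) ≤ (0.708041270461:ℝ) := by
  have hp1 := Real.pi_gt_d6
  have hp2 := Real.pi_lt_d6
  have h0 := cos_bnd (x := π/8) (a := (3141592/8000000:ℝ)) (b := (3141593/8000000:ℝ)) (by norm_num) (by linarith) (by linarith) (by norm_num)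
  have g0 : (0.921655077421:ℝ) ≤ Real.cos (π/8) ∧ Real.cos (π/8) ≤ (0.924132368890:ℝ) := ⟨le_trans (by norm_num) h0.1, le_trans h0.2 (by norm_num)⟩
  have h1 := cos_dbl (show (0:ℝ) ≤ 0.921655077421 by norm_num) g0.1 g0.2
  have g1 : (0.698896163471:ℝ) ≤ Real.cos (2*(π/8)) ∧ Real.cos (2*(π/8)) ≤ (0.708041270461:ℝ) := ⟨le_trans (by norm_num) h1.1, le_trans h1.2 (by norm_num)⟩
  have e : 2*(π/8) = π/4 := by ring
  rw [e] at g1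
  exact g1

private lemma cosb5 : (0.805549627748:ℝ) ≤ Real.cos (π/5) ∧ Real.cos (π/5) ≤ (0.809408171647:ℝ) := by
  have hp1 := Real.pi_gt_d6
  have hp2 := Real.pi_lt_d6
  have h0 := cos_bnd (x := π/10) (a := (3141592/10000000:ℝ)) (b := (3141593/10000000:ℝ)) (by norm_num) (by linarith) (by linarith) (by norm_num)
  have g0 : (0.950144627872:ℝ) ≤ Real.cos (π/10) ∧ Real.cos (π/10) ≤ (0.951159337768:ℝ) := ⟨le_trans (by norm_num) h0.1, le_trans h0.2 (by norm_num)⟩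
  have h1 := cos_dbl (show (0:ℝ) ≤ 0.950144627872 by norm_num) g0.1 g0.2
  have g1 : (0.805549627748:ℝ) ≤ Real.cos (2*(π/10)) ∧ Real.cos (2*(π/10)) ≤ (0.809408171647:ℝ) := ⟨le_trans (by norm_num) h1.1, le_trans h1.2 (by norm_num)⟩
  have e : 2*(π/10) = π/5 := by ring
  rw [e] at g1
  exact g1

private lemma cosb6 : (0.864325917988:ℝ) ≤ Real.cos (π/6) ∧ Real.cos (π/6) ≤ (0.866216253040:ℝ) := by
  have hp1 := Real.pi_gt_d6
  have hp2 := Real.pi_lt_d6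
  have h0 := cos_bnd (x := π/12) (a := (3141592/12000000:ℝ)) (b := (3141593/12000000:ℝ)) (by norm_num) (by linarith) (by linarith) (by norm_num)
  have g0 : (0.965485866802:ℝ) ≤ Real.cos (π/12) ∧ Real.cos (π/12) ≤ (0.965975220448:ℝ) := ⟨le_trans (by norm_num) h0.1, le_trans h0.2 (by norm_num)⟩
  have h1 := cos_dbl (show (0:ℝ) ≤ 0.965485866802 by norm_num) g0.1 g0.2
  have g1 : (0.864325917988:ℝ) ≤ Real.cos (2*(π/12)) ∧ Real.cos (2*(π/12)) ≤ (0.866216253040:ℝ) := ⟨le_trans (by norm_num) h1.1, le_trans h1.2 (by norm_num)⟩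
  have e : 2*(π/12) = π/6 := by ring
  rw [e] at g1
  exact g1

private lemma cosb7 : (0.900965254732:ℝ) ≤ Real.cos (π/7) ∧ Real.cos (π/7) ≤ (0.900969308013:ℝ) := by
  have hp1 := Real.pi_gt_d6
  have hp2 := Real.pi_lt_d6
  have h0 := cos_bnd (x := π/224) (a := (3141592/224000000:ℝ)) (b := (3141593/224000000:ℝ)) (by norm_num) (by linarith) (by linarith) (by norm_num)
  have g0 : (0.999901648110:ℝ) ≤ Real.cos (π/224) ∧ Real.cos (π/224) ≤ (0.999901652204:ℝ) := ⟨le_trans (by norm_num) h0.1, le_trans h0.2 (by norm_num)⟩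
  have h1 := cos_dbl (show (0:ℝ) ≤ 0.999901648110 by norm_num) g0.1 g0.2
  have g1 : (0.999606611786:ℝ) ≤ Real.cos (2*(π/224)) ∧ Real.cos (2*(π/224)) ≤ (0.999606628161:ℝ) := ⟨le_trans (by norm_num) h1.1, le_trans h1.2 (by norm_num)⟩
  have h2 := cos_dbl (show (0:ℝ) ≤ 0.999606611786 by norm_num) g1.1 g1.2
  have g2 : (0.998426756652:ℝ) ≤ Real.cos (2*(2*(π/224))) ∧ Real.cos (2*(2*(π/224))) ≤ (0.998426822127:ℝ) := ⟨le_trans (by norm_num) h2.1, le_trans h2.2 (by norm_num)⟩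
  have h3 := cos_dbl (show (0:ℝ) ≤ 0.998426756652 by norm_num) g2.1 g2.2
  have g3 : (0.993711976797:ℝ) ≤ Real.cos (2*(2*(2*(π/224)))) ∧ Real.cos (2*(2*(2*(π/224)))) ≤ (0.993712238286:ℝ) := ⟨le_trans (by norm_num) h3.1, le_trans h3.2 (by norm_num)⟩
  have h4 := cos_dbl (show (0:ℝ) ≤ 0.993711976797 by norm_num) g3.1 g3.2
  have g4 : (0.974926985659:ℝ) ≤ Real.cos (2*(2*(2*(2*(π/224))))) ∧ Real.cos (2*(2*(2*(2*(π/224))))) ≤ (0.974928025039:ℝ) := ⟨le_trans (by norm_num) h4.1, le_trans h4.2 (by norm_num)⟩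
  have h5 := cos_dbl (show (0:ℝ) ≤ 0.974926985659 by norm_num) g4.1 g4.2
  have g5 : (0.900965254732:ℝ) ≤ Real.cos (2*(2*(2*(2*(2*(π/224)))))) ∧ Real.cos (2*(2*(2*(2*(2*(π/224)))))) ≤ (0.900969308013:ℝ) := ⟨le_trans (by norm_num) h5.1, le_trans h5.2 (by norm_num)⟩
  have e : 2*(2*(2*(2*(2*(π/224))))) = π/7 := by ring
  rw [e] at g5
  exact g5

private lemma cosb8 : (0.923743529030:ℝ) ≤ Real.cos (π/8) ∧ Real.cos (π/8) ≤ (0.923894695469:ℝ) := by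
  have hp1 := Real.pi_gt_d6
  have hp2 := Real.pi_lt_d6
  have h0 := cos_bnd (x := π/32) (a := (3141592/32000000:ℝ)) (b := (3141593/32000000:ℝ)) (by norm_num) (by linarith) (by linarith) (by norm_num)
  have g0 : (0.995176017799:ℝ) ≤ Real.cos (π/32) ∧ Real.cos (π/32) ≤ (0.995185697596:ℝ) := ⟨le_trans (by norm_num) h0.1, le_trans h0.2 (by norm_num)⟩
  have h1 := cos_dbl (show (0:ℝ) ≤ 0.995176017799 by norm_num) g0.1 g0.2
  have g1 : (0.980750612804:ℝ) ≤ Real.cos (2*(π/32)) ∧ Real.cos (2*(π/32)) ≤ (0.980789145400:ℝ) := ⟨le_trans (by norm_num) h1.1, le_trans h1.2 (by norm_num)⟩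
  have h2 := cos_dbl (show (0:ℝ) ≤ 0.980750612804 by norm_num) g1.1 g1.2
  have g2 : (0.923743529030:ℝ) ≤ Real.cos (2*(2*(π/32))) ∧ Real.cos (2*(2*(π/32))) ≤ (0.923894695469:ℝ) := ⟨le_trans (by norm_num) h2.1, le_trans h2.2 (by norm_num)⟩
  have e : 2*(2*(π/32)) = π/8 := by ring
  rw [e] at g2
  exact g2

private lemma cosb9 : (0.939607273702:ℝ) ≤ Real.cos (π/9) ∧ Real.cos (π/9) ≤ (0.939702138066:ℝ) := by
  have hp1 := Real.pi_gt_d6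
  have hp2 := Real.pi_lt_d6
  have h0 := cos_bnd (x := π/36) (a := (3141592/36000000:ℝ)) (b := (3141593/36000000:ℝ)) (by norm_num) (by linarith) (by linarith) (by norm_num)
  have g0 : (0.996189260846:ℝ) ≤ Real.cos (π/36) ∧ Real.cos (π/36) ≤ (0.996195304404:ℝ) := ⟨le_trans (by norm_num) h0.1, le_trans h0.2 (by norm_num)⟩
  have h1 := cos_dbl (show (0:ℝ) ≤ 0.996189260846 by norm_num) g0.1 g0.2
  have g1 : (0.984786086849:ℝ) ≤ Real.cos (2*(π/36)) ∧ Real.cos (2*(π/36)) ≤ (0.984810169034:ℝ) := ⟨le_trans (by norm_num) h1.1, le_trans h1.2 (by norm_num)⟩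
  have h2 := cos_dbl (show (0:ℝ) ≤ 0.984786086849 by norm_num) g1.1 g1.2
  have g2 : (0.939607273702:ℝ) ≤ Real.cos (2*(2*(π/36))) ∧ Real.cos (2*(2*(π/36))) ≤ (0.939702138066:ℝ) := ⟨le_trans (by norm_num) h2.1, le_trans h2.2 (by norm_num)⟩
  have e : 2*(2*(π/36)) = π/9 := by ring
  rw [e] at g2
  exact g2

private lemma cosb10 : (0.951000312029:ℝ) ≤ Real.cos (π/10) ∧ Real.cos (π/10) ≤ (0.951062786023:ℝ) := by
  have hp1 := Real.pi_gt_d6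
  have hp2 := Real.pi_lt_d6
  have h0 := cos_bnd (x := π/40) (a := (3141592/40000000:ℝ)) (b := (3141593/40000000:ℝ)) (by norm_num) (by linarith) (by linarith) (by norm_num)
  have g0 : (0.996913766150:ℝ) ≤ Real.cos (π/40) ∧ Real.cos (π/40) ≤ (0.996917731702:ℝ) := ⟨le_trans (by norm_num) h0.1, le_trans h0.2 (by norm_num)⟩
  have h1 := cos_dbl (show (0:ℝ) ≤ 0.996913766150 by norm_num) g0.1 g0.2
  have g1 : (0.987674114278:ℝ) ≤ Real.cos (2*(π/40)) ∧ Real.cos (2*(π/40)) ≤ (0.987689927564:ℝ) := ⟨le_trans (by norm_num) h1.1, le_trans h1.2 (by norm_num)⟩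
  have h2 := cos_dbl (show (0:ℝ) ≤ 0.987674114278 by norm_num) g1.1 g1.2
  have g2 : (0.951000312029:ℝ) ≤ Real.cos (2*(2*(π/40))) ∧ Real.cos (2*(2*(π/40))) ≤ (0.951062786023:ℝ) := ⟨le_trans (by norm_num) h2.1, le_trans h2.2 (by norm_num)⟩
  have e : 2*(2*(π/40)) = π/10 := by ring
  rw [e] at g2
  exact g2

private lemma cosb11 : (0.959454479541:ℝ) ≤ Real.cos (π/11) ∧ Real.cos (π/11) ≤ (0.959497269775:ℝ) := by
  have hp1 := Real.pi_gt_d6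
  have hp2 := Real.pi_lt_d6
  have h0 := cos_bnd (x := π/44) (a := (3141592/44000000:ℝ)) (b := (3141593/44000000:ℝ)) (by norm_num) (by linarith) (by linarith) (by norm_num)
  have g0 : (0.997449677767:ℝ) ≤ Real.cos (π/44) ∧ Real.cos (π/44) ≤ (0.997452386574:ℝ) := ⟨le_trans (by norm_num) h0.1, le_trans h0.2 (by norm_num)⟩
  have h1 := cos_dbl (show (0:ℝ) ≤ 0.997449677767 by norm_num) g0.1 g0.2
  have g1 : (0.989811719354:ℝ) ≤ Real.cos (2*(π/44)) ∧ Real.cos (2*(π/44)) ≤ (0.989822526965:ℝ) := ⟨le_trans (by norm_num) h1.1, le_trans h1.2 (by norm_num)⟩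
  have h2 := cos_dbl (show (0:ℝ) ≤ 0.989811719354 by norm_num) g1.1 g1.2
  have g2 : (0.959454479541:ℝ) ≤ Real.cos (2*(2*(π/44))) ∧ Real.cos (2*(2*(π/44))) ≤ (0.959497269775:ℝ) := ⟨le_trans (by norm_num) h2.1, le_trans h2.2 (by norm_num)⟩
  have e : 2*(2*(π/44)) = π/11 := by ring
  rw [e] at g2
  exact g2

private lemma cosb13 : (0.970922010292:ℝ) ≤ Real.cos (π/13) ∧ Real.cos (π/13) ≤ (0.970944030759:ℝ) := by
  have hp1 := Real.pi_gt_d6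
  have hp2 := Real.pi_lt_d6
  have h0 := cos_bnd (x := π/52) (a := (3141592/52000000:ℝ)) (b := (3141593/52000000:ℝ)) (by norm_num) (by linarith) (by linarith) (by norm_num)
  have g0 : (0.998174304902:ℝ) ≤ Real.cos (π/52) ∧ Real.cos (π/52) ≤ (0.998175693827:ℝ) := ⟨le_trans (by norm_num) h0.1, le_trans h0.2 (by norm_num)⟩
  have h1 := cos_dbl (show (0:ℝ) ≤ 0.998174304902 by norm_num) g0.1 g0.2
  have g1 : (0.992703885933:ℝ) ≤ Real.cos (2*(π/52)) ∧ Real.cos (2*(π/52)) ≤ (0.992709431495:ℝ) := ⟨le_trans (by norm_num) h1.1, le_trans h1.2 (by norm_num)⟩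
  have h2 := cos_dbl (show (0:ℝ) ≤ 0.992703885933 by norm_num) g1.1 g1.2
  have g2 : (0.970922010292:ℝ) ≤ Real.cos (2*(2*(π/52))) ∧ Real.cos (2*(2*(π/52))) ≤ (0.970944030759:ℝ) := ⟨le_trans (by norm_num) h2.1, le_trans h2.2 (by norm_num)⟩
  have e : 2*(2*(π/52)) = π/13 := by ring
  rw [e] at g2
  exact g2

private lemma cosb14 : (0.974924222962:ℝ) ≤ Real.cos (π/14) ∧ Real.cos (π/14) ≤ (0.974928331937:ℝ) := by
  have hp1 := Real.pi_gt_d6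
  have hp2 := Real.pi_lt_d6
  have h0 := cos_bnd (x := π/112) (a := (3141592/112000000:ℝ)) (b := (3141593/112000000:ℝ)) (by norm_num) (by linarith) (by linarith) (by norm_num)
  have g0 : (0.999606568260:ℝ) ≤ Real.cos (π/112) ∧ Real.cos (π/112) ≤ (0.999606632996:ℝ) := ⟨le_trans (by norm_num) h0.1, le_trans h0.2 (by norm_num)⟩
  have h1 := cos_dbl (show (0:ℝ) ≤ 0.999606568260 by norm_num) g0.1 g0.2
  have g1 : (0.998426582617:ℝ) ≤ Real.cos (2*(π/112)) ∧ Real.cos (2*(π/112)) ≤ (0.998426841460:ℝ) := ⟨le_trans (by norm_num) h1.1, le_trans h1.2 (by norm_num)⟩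
  have h2 := cos_dbl (show (0:ℝ) ≤ 0.998426582617 by norm_num) g1.1 g1.2
  have g2 : (0.993711281752:ℝ) ≤ Real.cos (2*(2*(π/112))) ∧ Real.cos (2*(2*(π/112))) ≤ (0.993712315496:ℝ) := ⟨le_trans (by norm_num) h2.1, le_trans h2.2 (by norm_num)⟩
  have h3 := cos_dbl (show (0:ℝ) ≤ 0.993711281752 by norm_num) g2.1 g2.2
  have g3 : (0.974924222962:ℝ) ≤ Real.cos (2*(2*(2*(π/112)))) ∧ Real.cos (2*(2*(2*(π/112)))) ≤ (0.974928331937:ℝ) := ⟨le_trans (by norm_num) h3.1, le_trans h3.2 (by norm_num)⟩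
  have e : 2*(2*(2*(π/112))) = π/14 := by ring
  rw [e] at g3
  exact g3

private lemma cosb15 : (0.978147420493:ℝ) ≤ Real.cos (π/15) ∧ Real.cos (π/15) ≤ (0.978147630251:ℝ) := by
  have hp1 := Real.pi_gt_d6
  have hp2 := Real.pi_lt_d6
  have h0 := cos_bnd (x := π/480) (a := (3141592/480000000:ℝ)) (b := (3141593/480000000:ℝ)) (by norm_num) (by linarith) (by linarith) (by norm_num)
  have g0 : (0.999978581487:ℝ) ≤ Real.cos (π/480) ∧ Real.cos (π/480) ≤ (0.999978581693:ℝ) := ⟨le_trans (by norm_num) h0.1, le_trans h0.2 (by norm_num)⟩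
  have h1 := cos_dbl (show (0:ℝ) ≤ 0.999978581487 by norm_num) g0.1 g0.2
  have g1 : (0.999914326865:ℝ) ≤ Real.cos (2*(π/480)) ∧ Real.cos (2*(π/480)) ≤ (0.999914327690:ℝ) := ⟨le_trans (by norm_num) h1.1, le_trans h1.2 (by norm_num)⟩
  have h2 := cos_dbl (show (0:ℝ) ≤ 0.999914326865 by norm_num) g1.1 g1.2
  have g2 : (0.999657322139:ℝ) ≤ Real.cos (2*(2*(π/480))) ∧ Real.cos (2*(2*(π/480))) ≤ (0.999657325440:ℝ) := ⟨le_trans (by norm_num) h2.1, le_trans h2.2 (by norm_num)⟩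
  have h3 := cos_dbl (show (0:ℝ) ≤ 0.999657322139 by norm_num) g2.1 g2.2
  have g3 : (0.998629523412:ℝ) ≤ Real.cos (2*(2*(2*(π/480)))) ∧ Real.cos (2*(2*(2*(π/480)))) ≤ (0.998629536612:ℝ) := ⟨le_trans (by norm_num) h3.1, le_trans h3.2 (by norm_num)⟩
  have h4 := cos_dbl (show (0:ℝ) ≤ 0.998629523412 by norm_num) g3.1 g3.2
  have g4 : (0.994521850060:ℝ) ≤ Real.cos (2*(2*(2*(2*(π/480))))) ∧ Real.cos (2*(2*(2*(2*(π/480))))) ≤ (0.994521902788:ℝ) := ⟨le_trans (by norm_num) h4.1, le_trans h4.2 (by norm_num)⟩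
  have h5 := cos_dbl (show (0:ℝ) ≤ 0.994521850060 by norm_num) g4.1 g4.2
  have g5 : (0.978147420493:ℝ) ≤ Real.cos (2*(2*(2*(2*(2*(π/480)))))) ∧ Real.cos (2*(2*(2*(2*(2*(π/480)))))) ≤ (0.978147630251:ℝ) := ⟨le_trans (by norm_num) h5.1, le_trans h5.2 (by norm_num)⟩
  have e : 2*(2*(2*(2*(2*(π/480))))) = π/15 := by ring
  rw [e] at g5
  exact g5

private lemma cosb16 : (0.980776619816:ℝ) ≤ Real.cos (π/16) ∧ Real.cos (π/16) ≤ (0.980786250549:ℝ) := by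
  have hp1 := Real.pi_gt_d6
  have hp2 := Real.pi_lt_d6
  have h0 := cos_bnd (x := π/64) (a := (3141592/64000000:ℝ)) (b := (3141593/64000000:ℝ)) (by norm_num) (by linarith) (by linarith) (by norm_num)
  have g0 : (0.998794911643:ℝ) ≤ Real.cos (π/64) ∧ Real.cos (π/64) ≤ (0.998795517206:ℝ) := ⟨le_trans (by norm_num) h0.1, le_trans h0.2 (by norm_num)⟩
  have h1 := cos_dbl (show (0:ℝ) ≤ 0.998794911643 by norm_num) g0.1 g0.2
  have g1 : (0.995182551047:ℝ) ≤ Real.cos (2*(π/64)) ∧ Real.cos (2*(π/64)) ≤ (0.995184970382:ℝ) := ⟨le_trans (by norm_num) h1.1, le_trans h1.2 (by norm_num)⟩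
  have h2 := cos_dbl (show (0:ℝ) ≤ 0.995182551047 by norm_num) g1.1 g1.2
  have g2 : (0.980776619816:ℝ) ≤ Real.cos (2*(2*(π/64))) ∧ Real.cos (2*(2*(π/64))) ≤ (0.980786250549:ℝ) := ⟨le_trans (by norm_num) h2.1, le_trans h2.2 (by norm_num)⟩
  have e : 2*(2*(π/64)) = π/16 := by ring
  rw [e] at g2
  exact g2

private lemma cosb22 : (0.989811719354:ℝ) ≤ Real.cos (π/22) ∧ Real.cos (π/22) ≤ (0.989822526965:ℝ) := by
  have hp1 := Real.pi_gt_d6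
  have hp2 := Real.pi_lt_d6
  have h0 := cos_bnd (x := π/44) (a := (3141592/44000000:ℝ)) (b := (3141593/44000000:ℝ)) (by norm_num) (by linarith) (by linarith) (by norm_num)
  have g0 : (0.997449677767:ℝ) ≤ Real.cos (π/44) ∧ Real.cos (π/44) ≤ (0.997452386574:ℝ) := ⟨le_trans (by norm_num) h0.1, le_trans h0.2 (by norm_num)⟩
  have h1 := cos_dbl (show (0:ℝ) ≤ 0.997449677767 by norm_num) g0.1 g0.2
  have g1 : (0.989811719354:ℝ) ≤ Real.cos (2*(π/44)) ∧ Real.cos (2*(π/44)) ≤ (0.989822526965:ℝ) := ⟨le_trans (by norm_num) h1.1, le_trans h1.2 (by norm_num)⟩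
  have e : 2*(π/44) = π/22 := by ring
  rw [e] at g1
  exact g1

private lemma cosb23 : (0.990677805272:ℝ) ≤ Real.cos (π/23) ∧ Real.cos (π/23) ≤ (0.990686854839:ℝ) := by
  have hp1 := Real.pi_gt_d6
  have hp2 := Real.pi_lt_d6
  have h0 := cos_bnd (x := π/46) (a := (3141592/46000000:ℝ)) (b := (3141593/46000000:ℝ)) (by norm_num) (by linarith) (by linarith) (by norm_num)
  have g0 : (0.997666729242:ℝ) ≤ Real.cos (π/46) ∧ Real.cos (π/46) ≤ (0.997668996922:ℝ) := ⟨le_trans (by norm_num) h0.1, le_trans h0.2 (by norm_num)⟩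
  have h1 := cos_dbl (show (0:ℝ) ≤ 0.997666729242 by norm_num) g0.1 g0.2
  have g1 : (0.990677805272:ℝ) ≤ Real.cos (2*(π/46)) ∧ Real.cos (2*(π/46)) ≤ (0.990686854839:ℝ) := ⟨le_trans (by norm_num) h1.1, le_trans h1.2 (by norm_num)⟩
  have e : 2*(π/46) = π/23 := by ring
  rw [e] at g1
  exact g1

private lemma cosb102 : (0.999525635243:ℝ) ≤ Real.cos (π/102) ∧ Real.cos (π/102) ≤ (0.999525729286:ℝ) := by
  have hp1 := Real.pi_gt_d6
  have hp2 := Real.pi_lt_d6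
  have h0 := cos_bnd (x := π/102) (a := (3141592/102000000:ℝ)) (b := (3141593/102000000:ℝ)) (by norm_num) (by linarith) (by linarith) (by norm_num)
  have g0 : (0.999525635243:ℝ) ≤ Real.cos (π/102) ∧ Real.cos (π/102) ≤ (0.999525729286:ℝ) := ⟨le_trans (by norm_num) h0.1, le_trans h0.2 (by norm_num)⟩
  exact g0

private lemma cosb103 : (0.999534802384:ℝ) ≤ Real.cos (π/103) ∧ Real.cos (π/103) ≤ (0.999534892834:ℝ) := by
  have hp1 := Real.pi_gt_d6
  have hp2 := Real.pi_lt_d6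
  have h0 := cos_bnd (x := π/103) (a := (3141592/103000000:ℝ)) (b := (3141593/103000000:ℝ)) (by norm_num) (by linarith) (by linarith) (by norm_num)
  have g0 : (0.999534802384:ℝ) ≤ Real.cos (π/103) ∧ Real.cos (π/103) ≤ (0.999534892834:ℝ) := ⟨le_trans (by norm_num) h0.1, le_trans h0.2 (by norm_num)⟩
  exact g0

private lemma key12 : Real.sqrt 2 * Real.cos (π / 12) = 2 * Real.cos (π / 12) ^ 2 - 1/2 := by
  have e : π/12 = π/3 - π/4 := by ring
  rw [e, Real.cos_sub, Real.cos_pi_div_three, Real.cos_pi_div_four,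
    Real.sin_pi_div_three, Real.sin_pi_div_four]
  have h2 : Real.sqrt 2 ^ 2 = 2 := Real.sq_sqrt (by norm_num)
  have h3 : Real.sqrt 3 ^ 2 = 3 := Real.sq_sqrt (by norm_num)
  linear_combination (-1/4)*h2 - (Real.sqrt 2^2/8)*h3

theorem stmt_19 :
    Real.sqrt 2 * Real.cos (π / 12) = 2 * Real.cos (π / 12) ^ 2 - 1/2 ∧
    (∀ q q' : ℕ, 4 ≤ q → 7 ≤ q' → q' ≤ 15 →
      Real.sqrt 2 * Real.cos (π / q) = 2 * Real.cos (π / q') ^ 2 - 1/2 →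
      q = 12 ∧ q' = 12) := by
  refine ⟨key12, ?_⟩
  intro q q' hq hq7 hq15 heq
  have hsq : Real.sqrt 2 ^ 2 = 2 := Real.sq_sqrt (by norm_num)
  have hs1 : (1.414213562:ℝ) ≤ Real.sqrt 2 := by
    nlinarith [Real.sqrt_nonneg 2]
  have hs2 : Real.sqrt 2 ≤ (1.414213563:ℝ) := by
    nlinarith [Real.sqrt_nonneg 2]
  interval_cases q'
  · -- q' = 7
    exfalso
    push_cast at heq
    have hvlo : (2*(0.900965254732:ℝ)^2 - 1/2) ≤ 2 * Real.cos (π/7) ^ 2 - 1/2 := by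
      nlinarith [cosb7.1, cosb7.2]
    have hvhi : 2 * Real.cos (π/7) ^ 2 - 1/2 ≤ (2*(0.900969308013:ℝ)^2 - 1/2) := by
      nlinarith [cosb7.1, cosb7.2]
    rcases le_or_gt q 4 with h | h
    · exact no_low (n := 4) (by omega) h (by push_cast; exact cosb4.2) (by norm_num)
        hs2 (lt_of_lt_of_le (by norm_num) hvlo) heq
    · exact no_high (n := 5) (by omega) h (by push_cast; exact cosb5.1) (by norm_num)
        (by norm_num) hs1 (lt_of_le_of_lt hvhi (by norm_num)) heq
  · -- q' = 8
    exfalso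
    push_cast at heq
    have hvlo : (2*(0.923743529030:ℝ)^2 - 1/2) ≤ 2 * Real.cos (π/8) ^ 2 - 1/2 := by
      nlinarith [cosb8.1, cosb8.2]
    have hvhi : 2 * Real.cos (π/8) ^ 2 - 1/2 ≤ (2*(0.923894695469:ℝ)^2 - 1/2) := by
      nlinarith [cosb8.1, cosb8.2]
    rcases le_or_gt q 5 with h | h
    · exact no_low (n := 5) (by omega) h (by push_cast; exact cosb5.2) (by norm_num)
        hs2 (lt_of_lt_of_le (by norm_num) hvlo) heq
    · exact no_high (n := 6) (by omega) h (by push_cast; exact cosb6.1) (by norm_num)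
        (by norm_num) hs1 (lt_of_le_of_lt hvhi (by norm_num)) heq
  · -- q' = 9
    exfalso
    push_cast at heq
    have hvlo : (2*(0.939607273702:ℝ)^2 - 1/2) ≤ 2 * Real.cos (π/9) ^ 2 - 1/2 := by
      nlinarith [cosb9.1, cosb9.2]
    have hvhi : 2 * Real.cos (π/9) ^ 2 - 1/2 ≤ (2*(0.939702138066:ℝ)^2 - 1/2) := by
      nlinarith [cosb9.1, cosb9.2]
    rcases le_or_gt q 6 with h | h
    · exact no_low (n := 6) (by omega) h (by push_cast; exact cosb6.2) (by norm_num)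
        hs2 (lt_of_lt_of_le (by norm_num) hvlo) heq
    · exact no_high (n := 7) (by omega) h (by push_cast; exact cosb7.1) (by norm_num)
        (by norm_num) hs1 (lt_of_le_of_lt hvhi (by norm_num)) heq
  · -- q' = 10
    exfalso
    push_cast at heq
    have hvlo : (2*(0.951000312029:ℝ)^2 - 1/2) ≤ 2 * Real.cos (π/10) ^ 2 - 1/2 := by
      nlinarith [cosb10.1, cosb10.2]
    have hvhi : 2 * Real.cos (π/10) ^ 2 - 1/2 ≤ (2*(0.951062786023:ℝ)^2 - 1/2) := by
      nlinarith [cosb10.1, cosb10.2]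
    rcases le_or_gt q 8 with h | h
    · exact no_low (n := 8) (by omega) h (by push_cast; exact cosb8.2) (by norm_num)
        hs2 (lt_of_lt_of_le (by norm_num) hvlo) heq
    · exact no_high (n := 9) (by omega) h (by push_cast; exact cosb9.1) (by norm_num)
        (by norm_num) hs1 (lt_of_le_of_lt hvhi (by norm_num)) heq
  · -- q' = 11
    exfalso
    push_cast at heq
    have hvlo : (2*(0.959454479541:ℝ)^2 - 1/2) ≤ 2 * Real.cos (π/11) ^ 2 - 1/2 := by
      nlinarith [cosb11.1, cosb11.2]
    have hvhi : 2 * Real.cos (π/11) ^ 2 - 1/2 ≤ (2*(0.959497269775:ℝ)^2 - 1/2) := by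
      nlinarith [cosb11.1, cosb11.2]
    rcases le_or_gt q 9 with h | h
    · exact no_low (n := 9) (by omega) h (by push_cast; exact cosb9.2) (by norm_num)
        hs2 (lt_of_lt_of_le (by norm_num) hvlo) heq
    · exact no_high (n := 10) (by omega) h (by push_cast; exact cosb10.1) (by norm_num)
        (by norm_num) hs1 (lt_of_le_of_lt hvhi (by norm_num)) heq
  · -- q' = 12
    push_cast at heq
    rw [← key12] at heq
    have hc : Real.cos (π/(q:ℝ)) = Real.cos (π/12) := by
      have hpos : (0:ℝ) < Real.sqrt 2 := Real.sqrt_pos.mpr (by norm_num)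
      exact mul_left_cancel₀ (ne_of_gt hpos) heq
    refine ⟨?_, rfl⟩
    rcases lt_trichotomy q 12 with h | h | h
    · exfalso
      have h2 := cos_strict (show 1 ≤ q by omega) h
      rw [hc] at h2
      push_cast at h2
      exact lt_irrefl _ h2
    · exact h
    · exfalso
      have h2 := cos_strict (show 1 ≤ 12 by omega) h
      rw [hc] at h2
      push_cast at h2
      exact lt_irrefl _ h2
  · -- q' = 13
    exfalso
    push_cast at heq
    have hvlo : (2*(0.970922010292:ℝ)^2 - 1/2) ≤ 2 * Real.cos (π/13) ^ 2 - 1/2 := by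
      nlinarith [cosb13.1, cosb13.2]
    have hvhi : 2 * Real.cos (π/13) ^ 2 - 1/2 ≤ (2*(0.970944030759:ℝ)^2 - 1/2) := by
      nlinarith [cosb13.1, cosb13.2]
    rcases le_or_gt q 15 with h | h
    · exact no_low (n := 15) (by omega) h (by push_cast; exact cosb15.2) (by norm_num)
        hs2 (lt_of_lt_of_le (by norm_num) hvlo) heq
    · exact no_high (n := 16) (by omega) h (by push_cast; exact cosb16.1) (by norm_num)
        (by norm_num) hs1 (lt_of_le_of_lt hvhi (by norm_num)) heq
  · -- q' = 14
    exfalso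
    push_cast at heq
    have hvlo : (2*(0.974924222962:ℝ)^2 - 1/2) ≤ 2 * Real.cos (π/14) ^ 2 - 1/2 := by
      nlinarith [cosb14.1, cosb14.2]
    have hvhi : 2 * Real.cos (π/14) ^ 2 - 1/2 ≤ (2*(0.974928331937:ℝ)^2 - 1/2) := by
      nlinarith [cosb14.1, cosb14.2]
    rcases le_or_gt q 22 with h | h
    · exact no_low (n := 22) (by omega) h (by push_cast; exact cosb22.2) (by norm_num)
        hs2 (lt_of_lt_of_le (by norm_num) hvlo) heq
    · exact no_high (n := 23) (by omega) h (by push_cast; exact cosb23.1) (by norm_num)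
        (by norm_num) hs1 (lt_of_le_of_lt hvhi (by norm_num)) heq
  · -- q' = 15
    exfalso
    push_cast at heq
    have hvlo : (2*(0.978147420493:ℝ)^2 - 1/2) ≤ 2 * Real.cos (π/15) ^ 2 - 1/2 := by
      nlinarith [cosb15.1, cosb15.2]
    have hvhi : 2 * Real.cos (π/15) ^ 2 - 1/2 ≤ (2*(0.978147630251:ℝ)^2 - 1/2) := by
      nlinarith [cosb15.1, cosb15.2]
    rcases le_or_gt q 102 with h | h
    · exact no_low (n := 102) (by omega) h (by push_cast; exact cosb102.2) (by norm_num)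
        hs2 (lt_of_lt_of_le (by norm_num) hvlo) heq
    · exact no_high (n := 103) (by omega) h (by push_cast; exact cosb103.1) (by norm_num)
        (by norm_num) hs1 (lt_of_le_of_lt hvhi (by norm_num)) heq
end
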